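/- If G is a claw-free finite simple graph, then for every integer k ≥ 1, deg(J(G)^{(k)}) = k · deg(J(G)); in particular deg(J(G)^{(k)}) is a linear function of k. -/

import Mathlib

open MvPolynomial

/-- `C` is a vertex cover of `G`: every edge is incident to a vertex of `C`. -/
def IsVertexCover {V : Type*} (G : SimpleGraph V) (C : Set V) : Prop :=
  ∀ ⦃a b : V⦄, G.Adj a b → a ∈ C ∨ b ∈ C

/-- `C` is a minimal vertex cover of `G`. -/
def IsMinVertexCover {V : Type*} (G : SimpleGraph V) (C : Set V) : Prop :=
  IsVertexCover G C ∧ ∀ D : Set V, D ⊂ C → ¬ IsVertexCover G D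

/-- `A` is an independent set of `G`. -/
def IsIndepSet {V : Type*} (G : SimpleGraph V) (A : Set V) : Prop :=
  ∀ ⦃a⦄, a ∈ A → ∀ ⦃b⦄, b ∈ A → ¬ G.Adj a b

/-- `A` is a maximal independent set of `G`. -/
def IsMaxIndepSet {V : Type*} (G : SimpleGraph V) (A : Set V) : Prop :=
  IsIndepSet G A ∧ ∀ B : Set V, IsIndepSet G B → A ⊆ B → A = B

/-- A graph is unmixed if all maximal independent sets have the same cardinality. -/
def Unmixed {V : Type*} (G : SimpleGraph V) : Prop :=
  ∀ A B : Set V, IsMaxIndepSet G A → IsMaxIndepSet G B → A.ncard = B.ncard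

/-- `G` has no isolated vertices. -/
def HasNoIsolatedVertex {V : Type*} (G : SimpleGraph V) : Prop :=
  ∀ v : V, ∃ w : V, G.Adj v w

/-- `G` is very well-covered: no isolated vertices, an even number of vertices, and every
maximal independent set has cardinality half the number of vertices. -/
def VeryWellCovered {V : Type*} [Fintype V] (G : SimpleGraph V) : Prop :=
  HasNoIsolatedVertex G ∧ Even (Fintype.card V) ∧
    ∀ A : Set V, IsMaxIndepSet G A → 2 * A.ncard = Fintype.card V

/-- `G` is claw-free: it has no induced subgraph isomorphic to `K_{1,3}`. -/
def ClawFree {V : Type*} (G : SimpleGraph V) : Prop :=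
  ¬ ∃ a b c d : V, G.Adj a b ∧ G.Adj a c ∧ G.Adj a d ∧
      ¬ G.Adj b c ∧ ¬ G.Adj b d ∧ ¬ G.Adj c d ∧ b ≠ c ∧ b ≠ d ∧ c ≠ d

/-- The graph obtained from `G` by deleting the vertices in `A`: it has the same vertex set,
and its edges are the edges of `G` avoiding `A` (so the vertices of `A` become isolated). -/
def deleteVerts {V : Type*} (G : SimpleGraph V) (A : Set V) : SimpleGraph V where
  Adj a b := G.Adj a b ∧ a ∉ A ∧ b ∉ A
  symm := ⟨fun a b ⟨h1, h2, h3⟩ => ⟨h1.symm, h3, h2⟩⟩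
  loopless := ⟨fun a h => G.loopless.irrefl a h.1⟩

/-- The closed neighborhood `N_G[F]` of a set of vertices `F`. -/
def closedNbhdSet {V : Type*} (G : SimpleGraph V) (F : Set V) : Set V :=
  ⋃ a ∈ F, insert a (G.neighborSet a)

/-- The cover ideal `J(G)` of the graph `G`:
the intersection of the ideals `(x_i, x_j)` over the edges `{x_i, x_j}` of `G`. -/
noncomputable def coverIdeal (K : Type*) [Field K] {V : Type*} (G : SimpleGraph V) :
    Ideal (MvPolynomial V K) :=
  ⨅ (p : V × V) (_ : G.Adj p.1 p.2), Ideal.span {X p.1, X p.2}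

/-- The `k`-th symbolic power `J(G)^{(k)}` of the cover ideal of `G`:
the intersection of the ideals `(x_i, x_j)^k` over the edges `{x_i, x_j}` of `G`
(the empty intersection being the unit ideal). -/
noncomputable def symbPow (K : Type*) [Field K] {V : Type*} (G : SimpleGraph V) (k : ℕ) :
    Ideal (MvPolynomial V K) :=
  ⨅ (p : V × V) (_ : G.Adj p.1 p.2), Ideal.span {X p.1, X p.2} ^ k

/-- The degree of a monomial with exponent vector `m`. -/
def mdeg {V : Type*} (m : V →₀ ℕ) : ℕ := m.sum fun _ e => e

/-- The monomial with exponent vector `m` is a minimal monomial generator of `I`. -/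
def IsMinGen {K : Type*} [Field K] {V : Type*} (I : Ideal (MvPolynomial V K)) (m : V →₀ ℕ) :
    Prop :=
  (monomial m (1 : K)) ∈ I ∧
    ∀ i : V, m i ≠ 0 → (monomial (m - Finsupp.single i 1) (1 : K)) ∉ I

/-- `deg I`: the maximum degree of a minimal monomial generator of `I`. -/
noncomputable def genDeg {K : Type*} [Field K] {V : Type*} (I : Ideal (MvPolynomial V K)) : ℕ :=
  sSup {d : ℕ | ∃ m : V →₀ ℕ, IsMinGen I m ∧ mdeg m = d}


/-!
A monomial `x^m` is a minimal generator of `J(G)^{(k)}` iff `m a + m b ≥ k` on every edge and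
every vertex in the support of `m` lies on an edge where equality holds. Hence `k` times a
minimal generator of `J(G)` is one of `J(G)^{(k)}`, which gives `≥`.

Conversely, for a minimal generator `m` of `J(G)^{(k)}` put `y = k - m`: every vertex `v` has
`y v ≥ k` or lies on an edge `uv` with `y u + y v ≥ k`. Taking the vertices with `y ≥ k` together
with one well-chosen end of each edge of a maximum matching of the remaining such edges gives a
dominating set `D` with `k |D| ≤ ∑ y`. In a claw-free graph there is an independent dominating
set `S` with `|S| ≤ |D|` (Allan–Laskar); its complement is a minimal vertex cover, i.e. a minimal
generator of `J(G)` of degree `|V| - |S|`. So `deg m = k |V| - ∑ y ≤ k (|V| - |S|) ≤ k deg J(G)`.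
-/

namespace SimpleGraph

variable {V : Type*}

def IsDominatingSet (G : SimpleGraph V) (D : Set V) : Prop := ∀ v ∉ D, ∃ u ∈ D, G.Adj u v

section Matching

variable (G : SimpleGraph V) [DecidableEq V]

/-- A matching of `G`, each edge being recorded once, with an arbitrary orientation. -/
def IsPairMatching (M : Finset (V × V)) : Prop :=
  (∀ e ∈ M, G.Adj e.1 e.2) ∧ (M : Set (V × V)).PairwiseDisjoint fun e => ({e.1, e.2} : Finset V)

def matchedVerts (M : Finset (V × V)) : Finset V :=
  M.biUnion fun e => {e.1, e.2}

variable {G}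

theorem mem_matchedVerts {M : Finset (V × V)} {v : V} :
    v ∈ matchedVerts M ↔ ∃ e ∈ M, v = e.1 ∨ v = e.2 := by
  simp [matchedVerts]

theorem IsPairMatching.subset {M N : Finset (V × V)} (hM : G.IsPairMatching M) (hNM : N ⊆ M) :
    G.IsPairMatching N :=
  ⟨fun e he => hM.1 e (hNM he), hM.2.subset (by simpa using hNM)⟩

theorem IsPairMatching.insert {M : Finset (V × V)} (hM : G.IsPairMatching M) {u v : V}
    (huv : G.Adj u v) (hu : u ∉ matchedVerts M) (hv : v ∉ matchedVerts M) :
    G.IsPairMatching (insert (u, v) M) := by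
  refine ⟨by simpa [huv] using hM.1, ?_⟩
  rw [Finset.coe_insert]
  refine hM.2.insert fun e he _ => ?_
  simp only [mem_matchedVerts, not_exists, not_and, not_or] at hu hv
  simp only [Finset.disjoint_insert_left, Finset.disjoint_insert_right,
    Finset.disjoint_singleton_left, Finset.mem_insert, Finset.mem_singleton]
  grind

theorem card_insert_of_notMem_matchedVerts {M : Finset (V × V)} {u v : V}
    (hu : u ∉ matchedVerts M) : (insert (u, v) M).card = M.card + 1 :=
  Finset.card_insert_of_notMem fun h => hu (mem_matchedVerts.2 ⟨_, h, Or.inl rfl⟩)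

theorem IsPairMatching.sum_eq {M : Finset (V × V)} (hM : G.IsPairMatching M) (y : V → ℕ) :
    ∑ e ∈ M, (y e.1 + y e.2) = ∑ v ∈ matchedVerts M, y v := by
  rw [matchedVerts, Finset.sum_biUnion hM.2]
  exact Finset.sum_congr rfl fun e he => (Finset.sum_pair (G.ne_of_adj (hM.1 e he))).symm

theorem matchedVerts_insert (M : Finset (V × V)) (u v : V) :
    matchedVerts (insert (u, v) M) = insert u (insert v (matchedVerts M)) := by
  ext; simp [mem_matchedVerts, or_assoc]

theorem IsPairMatching.notMem_matchedVerts_erase {M : Finset (V × V)} (hM : G.IsPairMatching M)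
    {e : V × V} (he : e ∈ M) {v : V} (hv : v = e.1 ∨ v = e.2) :
    v ∉ matchedVerts (M.erase e) := by
  rw [mem_matchedVerts]
  rintro ⟨f, hf, hvf⟩
  rw [Finset.mem_erase] at hf
  have := hM.2 he hf.2 (Ne.symm hf.1)
  simp only [Function.onFun, Finset.disjoint_left, Finset.mem_insert, Finset.mem_singleton] at this
  grind

variable (G)

def IsMaximumPairMatching (M : Finset (V × V)) : Prop :=
  G.IsPairMatching M ∧ ∀ N, G.IsPairMatching N → N.card ≤ M.card

theorem exists_isMaximumPairMatching [Fintype V] : ∃ M, G.IsMaximumPairMatching M := by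
  obtain ⟨M, hM, hmax⟩ := Set.exists_max_image {M | G.IsPairMatching M} Finset.card
    (Set.toFinite _) ⟨∅, by simp [IsPairMatching]⟩
  exact ⟨M, hM, hmax⟩

variable {G}

theorem IsMaximumPairMatching.mem_matchedVerts_of_adj {M : Finset (V × V)}
    (hM : G.IsMaximumPairMatching M) {u v : V} (huv : G.Adj u v) (hu : u ∉ matchedVerts M) :
    v ∈ matchedVerts M := by
  by_contra hv
  have := hM.2 _ (hM.1.insert huv hu hv)
  rw [card_insert_of_notMem_matchedVerts hu] at this
  omega

/-- There is no augmenting path `q - e.1 - e.2 - v`. -/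
theorem IsMaximumPairMatching.eq_of_adj_of_adj {M : Finset (V × V)}
    (hM : G.IsMaximumPairMatching M) {e : V × V} (he : e ∈ M) {q v : V}
    (hq : q ∉ matchedVerts M) (hv : v ∉ matchedVerts M) (hqe : G.Adj q e.1) (hev : G.Adj e.2 v) :
    q = v := by
  by_contra hqv
  have hmono : matchedVerts (M.erase e) ⊆ matchedVerts M :=
    Finset.biUnion_subset_biUnion_of_subset_left _ (Finset.erase_subset e M)
  have he₁ := hM.1.notMem_matchedVerts_erase he (Or.inl rfl)
  have he₂ := hM.1.notMem_matchedVerts_erase he (Or.inr rfl)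
  have hm₁ : e.1 ∈ matchedVerts M := mem_matchedVerts.2 ⟨e, he, Or.inl rfl⟩
  have hm₂ : e.2 ∈ matchedVerts M := mem_matchedVerts.2 ⟨e, he, Or.inr rfl⟩
  have hN : G.IsPairMatching (insert (q, e.1) (insert (e.2, v) (M.erase e))) := by
    refine ((hM.1.subset (Finset.erase_subset e M)).insert hev he₂
      fun h => hv (hmono h)).insert hqe ?_ ?_ <;>
    · rw [matchedVerts_insert]
      grind [G.ne_of_adj (hM.1.1 e he)]
  have := hM.2 _ hN
  rw [card_insert_of_notMem_matchedVerts (by rw [matchedVerts_insert]; grind),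
    card_insert_of_notMem_matchedVerts he₂, Finset.card_erase_add_one he] at this
  omega

variable (G)

theorem exists_isPairMatching_dominating_card_le [Fintype V] :
    ∃ M : Finset (V × V), G.IsPairMatching M ∧ ∃ D : Finset V, D.card ≤ M.card ∧
      ∀ v, (∃ u, G.Adj u v) → v ∈ D ∨ ∃ u ∈ D, G.Adj u v := by
  classical
  obtain ⟨M, hM⟩ := G.exists_isMaximumPairMatching
  -- By `eq_of_adj_of_adj`, if both ends of `e` have unmatched neighbours, these are one and the
  -- same vertex; so taking `e.1` whenever it has one dominates every unmatched neighbour of `e`.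
  let chosen (e : V × V) : V := if ∃ q ∉ matchedVerts M, G.Adj q e.1 then e.1 else e.2
  refine ⟨M, hM.1, M.image chosen, Finset.card_image_le, ?_⟩
  rintro v ⟨u, huv⟩
  by_cases hv : v ∈ matchedVerts M
  · obtain ⟨e, he, hve⟩ := mem_matchedVerts.1 hv
    have hadj := hM.1.1 e he
    have hc : chosen e ∈ M.image chosen := Finset.mem_image_of_mem chosen he
    by_cases h : ∃ q ∉ matchedVerts M, G.Adj q e.1
    · rcases hve with rfl | rfl
      · exact Or.inl (by simpa [chosen, h] using hc)
      · exact Or.inr ⟨_, hc, by simpa [chosen, h] using hadj⟩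
    · rcases hve with rfl | rfl
      · exact Or.inr ⟨_, hc, by simpa [chosen, h] using hadj.symm⟩
      · exact Or.inl (by simpa [chosen, h] using hc)
  · obtain ⟨e, he, hue⟩ := mem_matchedVerts.1 (hM.mem_matchedVerts_of_adj huv.symm hv)
    have hc : chosen e ∈ M.image chosen := Finset.mem_image_of_mem chosen he
    refine Or.inr ⟨chosen e, hc, ?_⟩
    rcases hue with rfl | rfl
    · simpa [chosen, show ∃ q ∉ matchedVerts M, G.Adj q e.1 from ⟨v, hv, huv.symm⟩] using huv
    · by_cases h : ∃ q ∉ matchedVerts M, G.Adj q e.1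
      · obtain ⟨q, hq, hqe⟩ := h
        obtain rfl := hM.eq_of_adj_of_adj he hq hv hqe huv
        simpa [chosen, show ∃ q ∉ matchedVerts M, G.Adj q e.1 from ⟨q, hq, hqe⟩] using hqe.symm
      · simpa [chosen, h] using huv

end Matching

section Domination

variable [Fintype V] (G : SimpleGraph V)

theorem exists_dominatingSet_mul_card_le_sum (k : ℕ) (y : V → ℕ)
    (hy : ∀ v, k ≤ y v ∨ ∃ u, G.Adj u v ∧ k ≤ y u + y v) :
    ∃ D : Finset V, G.IsDominatingSet D ∧ k * D.card ≤ ∑ v, y v := by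
  classical
  let H : SimpleGraph V :=
    { Adj u v := G.Adj u v ∧ y u < k ∧ y v < k ∧ k ≤ y u + y v
      symm := ⟨fun _ _ ⟨h, hu, hv, hk⟩ => ⟨h.symm, hv, hu, by omega⟩⟩
      loopless := ⟨fun v h => G.loopless.irrefl v h.1⟩ }
  obtain ⟨M, hM, D, hDM, hD⟩ := H.exists_isPairMatching_dominating_card_le
  let A : Finset V := {v | k ≤ y v}
  refine ⟨A ∪ D, fun v hv => ?_, ?_⟩
  · simp only [Finset.coe_union, Set.mem_union, Finset.mem_coe, not_or] at hv
    have hvk : y v < k := by simpa [A] using hv.1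
    obtain ⟨u, huv, hk⟩ := (hy v).resolve_left (by omega)
    by_cases huk : k ≤ y u
    · exact ⟨u, by simp [A, huk], huv⟩
    · obtain ⟨w, hw, hwv⟩ := (hD v ⟨u, huv, by omega, hvk, hk⟩).resolve_left hv.2
      exact ⟨w, by simp [hw], hwv.1⟩
  · have hAM : Disjoint A (matchedVerts M) := by
      rw [Finset.disjoint_left]
      intro v hvA hvM
      obtain ⟨e, he, hve⟩ := mem_matchedVerts.1 hvM
      have := hM.1 e he
      simp only [A, Finset.mem_filter_univ] at hvA
      rcases hve with rfl | rfl <;> simp only [H] at this <;> omega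
    calc k * (A ∪ D).card ≤ k * A.card + k * M.card := by
          rw [← mul_add]; exact Nat.mul_le_mul_left k ((Finset.card_union_le A D).trans (by omega))
      _ ≤ ∑ v ∈ A, y v + ∑ e ∈ M, (y e.1 + y e.2) := by
          gcongr
          · simpa [mul_comm] using Finset.card_nsmul_le_sum A y k fun v hv => by simpa [A] using hv
          · simpa [mul_comm] using Finset.card_nsmul_le_sum M (fun e => y e.1 + y e.2) k
              fun e he => (hM.1 e he).2.2.2
      _ = ∑ v ∈ A ∪ matchedVerts M, y v := by rw [hM.sum_eq, Finset.sum_union hAM]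
      _ ≤ ∑ v, y v := Finset.sum_le_sum_of_subset (Finset.subset_univ _)

theorem exists_isIndepSet_subset_dominating (X : Finset V) :
    ∃ I ⊆ X, G.IsIndepSet I ∧ ∀ x ∈ X, x ∉ I → ∃ w ∈ I, G.Adj w x := by
  classical
  obtain ⟨I, ⟨hIX, hI⟩, hmax⟩ := Set.Finite.exists_maximal
    (Set.toFinite {I : Finset V | I ⊆ X ∧ G.IsIndepSet I}) ⟨∅, by simp⟩
  refine ⟨I, hIX, hI, fun x hxX hxI => ?_⟩
  by_contra! hx
  have hins : insert x I ⊆ X ∧ G.IsIndepSet ↑(insert x I) := by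
    refine ⟨Finset.insert_subset hxX hIX, ?_⟩
    rw [Finset.coe_insert, isIndepSet_iff, Set.pairwise_insert]
    exact ⟨hI, fun b hb _ => ⟨fun h => hx b hb h.symm, hx b hb⟩⟩
  exact hxI (hmax hins (Finset.subset_insert x I) (Finset.mem_insert_self x I))

theorem _root_.ClawFree.exists_isIndepSet_isDominatingSet_card_le {G : SimpleGraph V}
    (hG : ClawFree G) {D : Finset V} (hD : G.IsDominatingSet D) :
    ∃ S : Finset V, G.IsIndepSet S ∧ G.IsDominatingSet S ∧ S.card ≤ D.card := by
  classical
  obtain ⟨I, hID, hI, hIdom⟩ := G.exists_isIndepSet_subset_dominating D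
  obtain ⟨J, hJX, hJ, hJdom⟩ :=
    G.exists_isIndepSet_subset_dominating {v | v ∉ I ∧ ∀ w ∈ I, ¬ G.Adj w v}
  have hJI : ∀ j ∈ J, j ∉ I ∧ ∀ w ∈ I, ¬ G.Adj w j := fun j hj => by simpa using hJX hj
  refine ⟨I ∪ J, ?_, ?_, ?_⟩
  · rw [Finset.coe_union, isIndepSet_iff, Set.pairwise_union]
    exact ⟨hI, hJ, fun a ha b hb _ => ⟨(hJI b hb).2 a ha, fun h => (hJI b hb).2 a ha h.symm⟩⟩
  · intro v hv
    simp only [Finset.coe_union, Set.mem_union, Finset.mem_coe, not_or] at hv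
    by_cases hvI : ∃ w ∈ I, G.Adj w v
    · obtain ⟨w, hw, hwv⟩ := hvI
      exact ⟨w, by simp [hw], hwv⟩
    · obtain ⟨w, hw, hwv⟩ := hJdom v (by simpa [hv.1] using hvI) hv.2
      exact ⟨w, by simp [hw], hwv⟩
  -- A vertex of `D \ I` dominating two vertices of `J` would be the centre of a claw,
  -- the third leaf being a neighbour in `I`.
  have hJD : J.card ≤ (D \ I).card := by
    refine Finset.card_le_card_of_forall_subsingleton (fun j d => d = j ∨ G.Adj d j)
      (fun j hj => ?_) (fun d hd => ?_)
    · by_cases hjD : j ∈ D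
      · exact ⟨j, Finset.mem_sdiff.2 ⟨hjD, (hJI j hj).1⟩, Or.inl rfl⟩
      · obtain ⟨d, hd, hdj⟩ := hD j (by simpa using hjD)
        exact ⟨d, Finset.mem_sdiff.2 ⟨hd, fun h => (hJI j hj).2 d h hdj⟩, Or.inr hdj⟩
    · rintro j₁ ⟨hj₁, hdj₁⟩ j₂ ⟨hj₂, hdj₂⟩
      by_contra hne
      obtain ⟨hdD, hdI⟩ := Finset.mem_sdiff.1 hd
      rcases hdj₁ with rfl | hdj₁
      · exact hJ hj₁ hj₂ hne (hdj₂.resolve_left hne)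
      rcases hdj₂ with rfl | hdj₂
      · exact hJ hj₂ hj₁ (Ne.symm hne) hdj₁
      obtain ⟨w, hw, hwd⟩ := hIdom d hdD hdI
      exact hG ⟨d, w, j₁, j₂, hwd.symm, hdj₁, hdj₂, (hJI j₁ hj₁).2 w hw, (hJI j₂ hj₂).2 w hw,
        hJ hj₁ hj₂ hne, fun h => (hJI j₁ hj₁).1 (h ▸ hw), fun h => (hJI j₂ hj₂).1 (h ▸ hw), hne⟩
  calc (I ∪ J).card ≤ I.card + (D \ I).card := (Finset.card_union_le I J).trans (by omega)
    _ = D.card := by rw [add_comm, Finset.card_sdiff_add_card_eq_card hID]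

end Domination

end SimpleGraph

theorem monomial_mem_span_X_pair_pow_iff {V K : Type*} [Fintype V] [Field K] {i j : V}
    (hij : i ≠ j) (m : V →₀ ℕ) (k : ℕ) :
    monomial m (1 : K) ∈ (Ideal.span {X i, X j} : Ideal (MvPolynomial V K)) ^ k ↔
      k ≤ m i + m j := by
  classical
  constructor
  · intro hm
    -- `x_i, x_j ↦ t` and every other variable `↦ 1` maps the ideal into `(t ^ k)`
    let g : V → Polynomial K := fun v => if v ∈ ({i, j} : Finset V) then Polynomial.X else 1
    have hgm : aeval g (monomial m (1 : K)) = Polynomial.X ^ (m i + m j) := by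
      rw [aeval_monomial, map_one, one_mul, Finsupp.prod_pow]
      simp only [g, ite_pow, one_pow, Finset.prod_ite_mem, Finset.univ_inter,
        Finset.prod_pair hij, pow_add]
    have hgX : ∀ v ∈ ({i, j} : Finset V), aeval g (X v : MvPolynomial V K) = Polynomial.X :=
      fun v hv => by simp only [g, aeval_X, if_pos hv]
    have := Ideal.mem_map_of_mem (aeval g) hm
    rw [Ideal.map_pow, Ideal.map_span, Set.image_pair, hgX i (by simp), hgX j (by simp),
      Set.pair_eq_singleton, Ideal.span_singleton_pow, Ideal.mem_span_singleton, hgm] at this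
    simpa using Polynomial.natDegree_le_of_dvd this (pow_ne_zero _ Polynomial.X_ne_zero)
  · intro hk
    obtain ⟨a, b, hab, ha, hb⟩ : ∃ a b, a + b = k ∧ a ≤ m i ∧ b ≤ m j :=
      ⟨min k (m i), k - min k (m i), by omega, min_le_right _ _, by omega⟩
    have hs : Finsupp.single i a + Finsupp.single j b ≤ m := by
      intro v
      simp only [Finsupp.add_apply, Finsupp.single_apply]
      split_ifs <;> subst_vars <;> first | exact (hij rfl).elim | omega
    rw [← tsub_add_cancel_of_le hs, ← mul_one (1 : K), ← monomial_mul, ← mul_one (1 : K),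
      ← monomial_mul, ← X_pow_eq_monomial, ← X_pow_eq_monomial]
    refine Ideal.mul_mem_left _ _ ?_
    have hXi : (X i : MvPolynomial V K) ∈ Ideal.span {X i, X j} := Ideal.subset_span (by simp)
    have hXj : (X j : MvPolynomial V K) ∈ Ideal.span {X i, X j} := Ideal.subset_span (by simp)
    have := Ideal.mul_mem_mul (Ideal.pow_mem_pow hXi a) (Ideal.pow_mem_pow hXj b)
    rwa [← pow_add, hab] at this

section MinimalGenerators

variable {V K : Type*} [Field K] (G : SimpleGraph V)

theorem coverIdeal_eq_symbPow_one : coverIdeal K G = symbPow K G 1 := by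
  simp only [coverIdeal, symbPow, pow_one]

variable [Fintype V]

theorem monomial_mem_symbPow_iff (k : ℕ) (m : V →₀ ℕ) :
    monomial m (1 : K) ∈ symbPow K G k ↔ ∀ a b, G.Adj a b → k ≤ m a + m b := by
  simp only [symbPow, Submodule.mem_iInf, Prod.forall]
  exact forall₃_congr fun a b hab =>
    monomial_mem_span_X_pair_pow_iff (G.ne_of_adj hab) m k

theorem isMinGen_symbPow_iff {k : ℕ} {m : V →₀ ℕ} :
    IsMinGen (symbPow K G k) m ↔ (∀ a b, G.Adj a b → k ≤ m a + m b) ∧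
      ∀ i, m i ≠ 0 → ∃ u, G.Adj i u ∧ m i + m u = k := by
  classical
  simp only [IsMinGen, monomial_mem_symbPow_iff, not_forall, not_le, exists_prop]
  refine and_congr_right fun hcov => forall₂_congr fun i hi => ⟨?_, ?_⟩
  · rintro ⟨a, b, hab, hlt⟩
    have := hcov a b hab
    have hne := G.ne_of_adj hab
    simp only [Finsupp.tsub_apply, Finsupp.single_apply] at hlt
    by_cases hia : i = a
    · subst hia
      exact ⟨b, hab, by simp only [if_neg hne, if_true] at hlt; omega⟩
    · by_cases hib : i = b
      · subst hib
        exact ⟨a, hab.symm, by simp only [if_neg hia, if_true] at hlt; omega⟩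
      · simp only [if_neg hia, if_neg hib] at hlt
        omega
  · rintro ⟨u, hiu, htight⟩
    refine ⟨i, u, hiu, ?_⟩
    simp only [Finsupp.tsub_apply, Finsupp.single_eq_same, Finsupp.single_apply,
      if_neg (G.ne_of_adj hiu)]
    omega

variable {G}

theorem IsMinGen.apply_le {k : ℕ} {m : V →₀ ℕ} (hm : IsMinGen (symbPow K G k) m)
    (v : V) : m v ≤ k := by
  obtain ⟨-, htight⟩ := (isMinGen_symbPow_iff G).1 hm
  by_cases hv : m v = 0
  · omega
  · obtain ⟨u, -, h⟩ := htight v hv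
    omega

theorem IsMinGen.nsmul {u : V →₀ ℕ} (hu : IsMinGen (symbPow K G 1) u) (k : ℕ) :
    IsMinGen (symbPow K G k) (k • u) := by
  obtain ⟨hcov, htight⟩ := (isMinGen_symbPow_iff G).1 hu
  refine (isMinGen_symbPow_iff G).2 ⟨fun a b hab => ?_, fun i hi => ?_⟩
  · simpa [← mul_add] using Nat.mul_le_mul_left k (hcov a b hab)
  · obtain ⟨w, hiw, h⟩ := htight i (by simpa using right_ne_zero_of_mul hi)
    exact ⟨w, hiw, by simp [← mul_add, h]⟩

theorem isMinGen_coverIdeal_of_isIndepSet_of_isDominatingSet [DecidableEq V] {S : Finset V}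
    (hSi : G.IsIndepSet S) (hSd : G.IsDominatingSet S) :
    IsMinGen (coverIdeal K G) (Finsupp.indicator Sᶜ fun _ _ => 1) := by
  rw [coverIdeal_eq_symbPow_one, isMinGen_symbPow_iff]
  refine ⟨fun a b hab => ?_, fun i hi => ?_⟩
  · by_cases ha : a ∈ S
    · have hb : b ∉ S := fun hb => hSi ha hb (G.ne_of_adj hab) hab
      simp [Finsupp.indicator_apply, hb]
    · simp [Finsupp.indicator_apply, ha]
  · have hiS : i ∉ S := by simpa [Finsupp.indicator_apply] using hi
    obtain ⟨u, huS, hui⟩ := hSd i hiS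
    exact ⟨u, hui.symm, by simpa [Finsupp.indicator_apply, hiS] using huS⟩

end MinimalGenerators

section Degree

variable {V K : Type*} [Field K]

theorem mdeg_nsmul (k : ℕ) (m : V →₀ ℕ) : mdeg (k • m) = k * mdeg m :=
  map_nsmul Finsupp.degree k m

theorem mdeg_indicator_one (s : Finset V) : mdeg (Finsupp.indicator s fun _ _ => 1) = s.card := by
  rw [mdeg, Finsupp.sum_of_support_subset _ (Finsupp.support_indicator_subset _ _) _
    fun _ _ => rfl, Finset.card_eq_sum_ones]
  exact Finset.sum_congr rfl fun v hv => Finsupp.indicator_of_mem hv _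

theorem mdeg_eq_sum [Fintype V] (m : V →₀ ℕ) : mdeg m = ∑ v, m v := Finsupp.degree_eq_sum m

theorem genDeg_le {I : Ideal (MvPolynomial V K)} {d : ℕ} (h : ∀ m, IsMinGen I m → mdeg m ≤ d) :
    genDeg I ≤ d :=
  csSup_le' fun _ ⟨m, hm, hmd⟩ => hmd ▸ h m hm

theorem exists_isMinGen_mdeg_eq_genDeg {I : Ideal (MvPolynomial V K)} (h : genDeg I ≠ 0) :
    ∃ m, IsMinGen I m ∧ mdeg m = genDeg I := by
  have hne : {d | ∃ m, IsMinGen I m ∧ mdeg m = d}.Nonempty :=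
    Set.nonempty_iff_ne_empty.2 fun he => h (by rw [genDeg, he, csSup_empty]; rfl)
  have hbdd : BddAbove {d | ∃ m, IsMinGen I m ∧ mdeg m = d} := by
    by_contra hb
    exact h (by rw [genDeg, Nat.sSup_of_not_bddAbove hb])
  exact Nat.sSup_mem hne hbdd

variable [Fintype V] {G : SimpleGraph V}

theorem IsMinGen.mdeg_le_genDeg {k : ℕ} {m : V →₀ ℕ} (hm : IsMinGen (symbPow K G k) m) :
    mdeg m ≤ genDeg (symbPow K G k) := by
  refine le_csSup ⟨k * Fintype.card V, ?_⟩ ⟨m, hm, rfl⟩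
  rintro _ ⟨n, hn, rfl⟩
  rw [mdeg_eq_sum]
  simpa [mul_comm] using Finset.sum_le_card_nsmul Finset.univ n k fun v _ => hn.apply_le v

end Degree

theorem ClawFree.mdeg_le_of_isMinGen_symbPow {V K : Type*} [Fintype V] [Field K]
    {G : SimpleGraph V} (hG : ClawFree G) {k : ℕ} {m : V →₀ ℕ}
    (hm : IsMinGen (symbPow K G k) m) : mdeg m ≤ k * genDeg (coverIdeal K G) := by
  classical
  obtain ⟨-, htight⟩ := (isMinGen_symbPow_iff G).1 hm
  have hy : ∀ v, k ≤ k - m v ∨ ∃ u, G.Adj u v ∧ k ≤ (k - m u) + (k - m v) := by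
    intro v
    by_cases hv : m v = 0
    · exact Or.inl (by omega)
    · obtain ⟨u, hvu, h⟩ := htight v hv
      exact Or.inr ⟨u, hvu.symm, by have := hm.apply_le u; omega⟩
  obtain ⟨D, hD, hDy⟩ := G.exists_dominatingSet_mul_card_le_sum k (fun v => k - m v) hy
  obtain ⟨S, hSi, hSd, hSD⟩ := hG.exists_isIndepSet_isDominatingSet_card_le hD
  have hSc : Sᶜ.card ≤ genDeg (coverIdeal K G) := by
    have hgen := isMinGen_coverIdeal_of_isIndepSet_of_isDominatingSet (K := K) hSi hSd
    rw [coverIdeal_eq_symbPow_one] at hgen ⊢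
    simpa only [mdeg_indicator_one] using hgen.mdeg_le_genDeg
  have hsum : mdeg m + ∑ v, (k - m v) = k * Fintype.card V := by
    rw [mdeg_eq_sum, ← Finset.sum_add_distrib, Finset.sum_congr rfl fun v _ =>
      Nat.add_sub_cancel' (hm.apply_le v)]
    simp [mul_comm]
  have hcard : k * Fintype.card V = k * S.card + k * Sᶜ.card := by
    rw [← mul_add, Finset.card_add_card_compl]
  have hkS := Nat.mul_le_mul_left k hSD
  have hkSc := Nat.mul_le_mul_left k hSc
  omega

theorem statement2_general {V : Type*} [Fintype V] (K : Type*) [Field K] (G : SimpleGraph V)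
    (hG : ClawFree G) (k : ℕ) :
    genDeg (symbPow K G k) = k * genDeg (coverIdeal K G) := by
  refine le_antisymm (genDeg_le fun m hm => hG.mdeg_le_of_isMinGen_symbPow hm) ?_
  rcases eq_or_ne (genDeg (coverIdeal K G)) 0 with h0 | h0
  · simp [h0]
  obtain ⟨u, hu, hdeg⟩ := exists_isMinGen_mdeg_eq_genDeg h0
  rw [coverIdeal_eq_symbPow_one] at hu
  rw [← hdeg, ← mdeg_nsmul]
  exact (hu.nsmul k).mdeg_le_genDeg

/-- Corollary `deguc`, claw-free case: if `G` is a claw-free finite simple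
graph, then `deg (J(G)^{(k)}) = k * deg (J(G))` for every `k ≥ 1`; in particular,
`deg (J(G)^{(k)})` is a linear function of `k`. -/
theorem statement2 {V : Type*} [Fintype V] (K : Type*) [Field K] (G : SimpleGraph V)
    (hG : ClawFree G) (k : ℕ) (hk : 1 ≤ k) :
    genDeg (symbPow K G k) = k * genDeg (coverIdeal K G) :=
  statement2_general K G hG k
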